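/- If the smoothed multitask square-root Lasso estimator B̂ minimizes B ↦ g((Y − XB)/√(nq)) + λ‖B‖_{2,1} where g = ‖·‖_F □ (‖·‖_F²/(2σ_min) + σ_min/2), and the residual Ê = Y − XB̂ satisfies ‖Ê‖_F/√(nq) ≥ σ_min, then first-order optimality implies (1/(nq))‖XᵀÊ‖_{2,∞} ≤ λ·‖Ê‖_F/√(nq); if instead ‖Ê‖_F/√(nq) < σ_min, then (1/(nq))‖XᵀÊ‖_{2,∞} ≤ λσ_min. In both cases (1/(nq))‖XᵀÊ‖_{2,∞} ≤ λ·max(‖Ê‖_F/√(nq), σ_min). -/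

import Mathlib

open scoped BigOperators
open Matrix Classical

/-- Euclidean norm of a row. -/
noncomputable def rowNorm {q : ℕ} (v : Fin q → ℝ) : ℝ := Real.sqrt (∑ j, (v j) ^ 2)

/-- `ℓ_{2,1}` norm: sum of row Euclidean norms. -/
noncomputable def norm21 {p q : ℕ} (B : Matrix (Fin p) (Fin q) ℝ) : ℝ :=
  ∑ j, rowNorm (B j)

/-- `ℓ_{2,∞}` norm: maximum of row Euclidean norms. -/
noncomputable def norm2inf {p q : ℕ} (B : Matrix (Fin p) (Fin q) ℝ) : ℝ :=
  ⨆ j, rowNorm (B j)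

/-- Frobenius norm of a real matrix. -/
noncomputable def frob {n q : ℕ} (Z : Matrix (Fin n) (Fin q) ℝ) : ℝ :=
  Real.sqrt (∑ i, ∑ j, (Z i j) ^ 2)

/-- Smoothed Frobenius norm: infimal convolution of `‖·‖_F` with
`W ↦ ‖W‖_F²/(2σmin) + σmin/2`. -/
noncomputable def smoothedFrob {n q : ℕ} (σmin : ℝ) (Z : Matrix (Fin n) (Fin q) ℝ) : ℝ :=
  sInf {v : ℝ | ∃ W : Matrix (Fin n) (Fin q) ℝ,
    v = frob (Z - W) + ((frob W) ^ 2 / (2 * σmin) + σmin / 2)}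

/-! The smoothed loss `g` is the Moreau envelope of the norm, so it is differentiable with gradient
`Z / max ‖Z‖ σ` and curvature at most `1/σ`:
`g (x + d) ≤ g x + ⟪x, d⟫ / max ‖x‖ σ + ‖d‖² / (2σ)`. Moving the `j`-th row of `B̂` by `t • u`,
where `u = (XᵀÊ)_j`, raises the penalty by at most `λ t ‖u‖` and lowers the loss by
`t ‖u‖² / (nq · max (‖Ê‖_F / √(nq)) σ)` up to `O(t²)`. Minimality of `B̂` and `t → 0⁺` then bound
every row norm `‖u‖` by `nq λ max (‖Ê‖_F / √(nq)) σ`. -/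

open scoped RealInnerProductSpace

noncomputable def huber (σ r : ℝ) : ℝ := if σ ≤ r then r else r ^ 2 / (2 * σ) + σ / 2

lemma huber_le_of_sub_le {σ r w d : ℝ} (hσ : 0 < σ) (hr : 0 ≤ r) (hw : 0 ≤ w) (hd : 0 ≤ d)
    (hrw : r - w ≤ d) : huber σ r ≤ d + (w ^ 2 / (2 * σ) + σ / 2) := by
  unfold huber
  split_ifs with hσr
  · have : (w - σ) ^ 2 / (2 * σ) = w ^ 2 / (2 * σ) + σ / 2 - w := by field_simp; ring
    linarith [show 0 ≤ (w - σ) ^ 2 / (2 * σ) by positivity]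
  · rw [← sub_nonneg]
    have : d + (w ^ 2 / (2 * σ) + σ / 2) - (r ^ 2 / (2 * σ) + σ / 2) =
        (2 * σ * d + w ^ 2 - r ^ 2) / (2 * σ) := by field_simp; ring
    rw [this]
    apply div_nonneg _ (by positivity)
    -- for `w ≤ r < σ`: `2σd + w² - r² ≥ (r - w) (2σ - r - w) ≥ 0`
    rcases le_total r w with hrw' | hrw' <;> nlinarith

lemma huber_eq_max {σ : ℝ} (hσ : 0 < σ) (r : ℝ) :
    huber σ r = (1 - σ / max r σ) * r + (σ / max r σ) ^ 2 * r ^ 2 / (2 * σ) + σ / 2 := by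
  unfold huber
  split_ifs with hσr
  · rw [max_eq_left hσr]
    have : r ≠ 0 := (hσ.trans_le hσr).ne'
    field_simp
    ring
  · rw [max_eq_right (not_le.mp hσr).le, div_self hσ.ne']
    ring

lemma le_of_forall_pos_mul_le_add_sq {a b C : ℝ} (h : ∀ t > 0, a * t ≤ b * t + C * t ^ 2) :
    a ≤ b := by
  refine le_of_forall_pos_le_add fun ε hε => ?_
  set t := ε / (|C| + 1)
  have ht : 0 < t := by positivity
  have hCt : C * t ≤ ε := by
    calc C * t ≤ |C| * t := by gcongr; exact le_abs_self C
      _ ≤ (|C| + 1) * t := by gcongr; linarith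
      _ = ε := mul_div_cancel₀ ε (by positivity)
  nlinarith [h t ht]

section SmoothedNorm

variable {F : Type*} [NormedAddCommGroup F] {σ : ℝ}

noncomputable def smoothedNorm (σ : ℝ) (x : F) : ℝ :=
  sInf {v : ℝ | ∃ w : F, v = ‖x - w‖ + (‖w‖ ^ 2 / (2 * σ) + σ / 2)}

lemma smoothedNorm_le (hσ : 0 ≤ σ) (x w : F) :
    smoothedNorm σ x ≤ ‖x - w‖ + (‖w‖ ^ 2 / (2 * σ) + σ / 2) := by
  refine csInf_le ⟨0, ?_⟩ ⟨w, rfl⟩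
  rintro _ ⟨w', rfl⟩
  positivity

lemma huber_norm_le_smoothedNorm (hσ : 0 < σ) (x : F) : huber σ ‖x‖ ≤ smoothedNorm σ x := by
  refine le_csInf ⟨_, x, rfl⟩ ?_
  rintro _ ⟨w, rfl⟩
  exact huber_le_of_sub_le hσ (norm_nonneg x) (norm_nonneg w) (norm_nonneg _) (norm_sub_norm_le x w)

variable [InnerProductSpace ℝ F]

/-- The infimum at `x + d` is evaluated at the minimiser `(σ / max ‖x‖ σ) • x` of the infimum at
`x`, shifted by `d`. -/
lemma smoothedNorm_add_le (hσ : 0 < σ) (x d : F) :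
    smoothedNorm σ (x + d) ≤ smoothedNorm σ x + ⟪x, d⟫ / max ‖x‖ σ + ‖d‖ ^ 2 / (2 * σ) := by
  set m := max ‖x‖ σ
  have hm : 0 < m := hσ.trans_le (le_max_right _ _)
  have hσm : 0 ≤ 1 - σ / m := sub_nonneg.mpr ((div_le_one hm).mpr (le_max_right _ _))
  have hres : x + d - ((σ / m) • x + d) = (1 - σ / m) • x := by rw [sub_smul, one_smul]; abel
  have hW : ‖(σ / m) • x + d‖ ^ 2 = (σ / m) ^ 2 * ‖x‖ ^ 2 + 2 * (σ / m) * ⟪x, d⟫ + ‖d‖ ^ 2 := by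
    rw [norm_add_sq_real, norm_smul, real_inner_smul_left, Real.norm_of_nonneg (by positivity)]
    ring
  calc smoothedNorm σ (x + d)
      ≤ ‖x + d - ((σ / m) • x + d)‖ + (‖(σ / m) • x + d‖ ^ 2 / (2 * σ) + σ / 2) :=
        smoothedNorm_le hσ.le _ _
    _ = huber σ ‖x‖ + ⟪x, d⟫ / m + ‖d‖ ^ 2 / (2 * σ) := by
        rw [hres, hW, norm_smul, Real.norm_of_nonneg hσm, huber_eq_max hσ]
        field_simp
        ring
    _ ≤ smoothedNorm σ x + ⟪x, d⟫ / m + ‖d‖ ^ 2 / (2 * σ) := by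
        gcongr
        exact huber_norm_le_smoothedNorm hσ x

lemma inner_le_of_smoothedNorm_le_sub_smul (hσ : 0 < σ) {x v : F} {b : ℝ}
    (h : ∀ t > 0, smoothedNorm σ x ≤ smoothedNorm σ (x - t • v) + b * t) :
    ⟪x, v⟫ ≤ b * max ‖x‖ σ := by
  have hm : 0 < max ‖x‖ σ := hσ.trans_le (le_max_right _ _)
  rw [← div_le_iff₀ hm]
  refine le_of_forall_pos_mul_le_add_sq (C := ‖v‖ ^ 2 / (2 * σ)) fun t ht => ?_
  have hdescent : smoothedNorm σ (x - t • v) ≤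
      smoothedNorm σ x - ⟪x, v⟫ / max ‖x‖ σ * t + ‖v‖ ^ 2 / (2 * σ) * t ^ 2 := by
    have := smoothedNorm_add_le hσ x (-(t • v))
    rw [← sub_eq_add_neg, inner_neg_right, real_inner_smul_right, norm_neg, norm_smul,
      Real.norm_of_nonneg ht.le] at this
    convert this using 1
    ring
  linarith [h t ht]

end SmoothedNorm

section Matrices

variable {n p q : ℕ}

noncomputable def frobEquiv : Matrix (Fin n) (Fin q) ℝ ≃ₗ[ℝ] EuclideanSpace ℝ (Fin n × Fin q) :=
  (LinearEquiv.curry ℝ ℝ (Fin n) (Fin q)).symm ≪≫ₗ (WithLp.linearEquiv 2 ℝ _).symm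

@[simp]
lemma frobEquiv_apply (Z : Matrix (Fin n) (Fin q) ℝ) (ik : Fin n × Fin q) :
    frobEquiv Z ik = Z ik.1 ik.2 :=
  rfl

lemma frob_eq_norm_frobEquiv (Z : Matrix (Fin n) (Fin q) ℝ) : frob Z = ‖frobEquiv Z‖ := by
  simp [frob, EuclideanSpace.norm_eq, Fintype.sum_prod_type]

lemma smoothedFrob_eq_smoothedNorm (σ : ℝ) (Z : Matrix (Fin n) (Fin q) ℝ) :
    smoothedFrob σ Z = smoothedNorm σ (frobEquiv Z) := by
  unfold smoothedFrob smoothedNorm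
  congr 1
  ext v
  simp only [frob_eq_norm_frobEquiv, map_sub]
  exact (frobEquiv.surjective.exists
    (p := fun w => v = ‖frobEquiv Z - w‖ + (‖w‖ ^ 2 / (2 * σ) + σ / 2))).symm

lemma inner_frobEquiv_mul_updateRow_zero (E : Matrix (Fin n) (Fin q) ℝ)
    (X : Matrix (Fin n) (Fin p) ℝ) (j : Fin p) (v : Fin q → ℝ) :
    ⟪frobEquiv E, frobEquiv (X * updateRow 0 j v)⟫ = ∑ k, (Xᵀ * E) j k * v k := by
  simp only [PiLp.inner_apply, frobEquiv_apply, Matrix.mul_apply, updateRow_apply,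
    Matrix.zero_apply, mul_ite, mul_zero, Finset.sum_ite_eq', Finset.mem_univ, ↓reduceIte,
    RCLike.inner_apply, Real.ringHom_apply, Fintype.sum_prod_type, transpose_apply,
    Finset.sum_mul]
  rw [Finset.sum_comm]
  exact Finset.sum_congr rfl fun k _ => Finset.sum_congr rfl fun i _ => by ring

lemma rowNorm_eq_norm (v : Fin q → ℝ) :
    rowNorm v = ‖(WithLp.toLp 2 v : EuclideanSpace ℝ (Fin q))‖ := by
  simp [rowNorm, EuclideanSpace.norm_eq]

lemma rowNorm_nonneg (v : Fin q → ℝ) : 0 ≤ rowNorm v := Real.sqrt_nonneg _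

lemma rowNorm_sq (v : Fin q → ℝ) : rowNorm v ^ 2 = ∑ k, v k * v k := by
  rw [rowNorm, Real.sq_sqrt (by positivity)]
  simp only [sq]

lemma rowNorm_add_le (v w : Fin q → ℝ) : rowNorm (v + w) ≤ rowNorm v + rowNorm w := by
  simp only [rowNorm_eq_norm, WithLp.toLp_add]
  exact norm_add_le _ _

lemma rowNorm_smul (t : ℝ) (v : Fin q → ℝ) : rowNorm (t • v) = |t| * rowNorm v := by
  simp only [rowNorm_eq_norm, WithLp.toLp_smul, norm_smul, Real.norm_eq_abs]

lemma norm21_add_le (A B : Matrix (Fin p) (Fin q) ℝ) : norm21 (A + B) ≤ norm21 A + norm21 B := by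
  rw [norm21, norm21, norm21, ← Finset.sum_add_distrib]
  exact Finset.sum_le_sum fun j _ => rowNorm_add_le (A j) (B j)

lemma norm21_smul (t : ℝ) (B : Matrix (Fin p) (Fin q) ℝ) : norm21 (t • B) = |t| * norm21 B := by
  rw [norm21, norm21, Finset.mul_sum]
  exact Finset.sum_congr rfl fun j _ => rowNorm_smul t (B j)

lemma norm21_updateRow_zero (j : Fin p) (v : Fin q → ℝ) : norm21 (updateRow 0 j v) = rowNorm v := by
  rw [norm21, Finset.sum_eq_single j]
  · rw [updateRow_self]
  · intro j' _ hj'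
    simp [updateRow_ne hj', rowNorm]
  · simp

lemma sq_mul_rowNorm_transpose_mul_residual_le {σ lam c : ℝ} (hσ : 0 < σ) (hlam : 0 ≤ lam)
    (hc : 0 < c) (X : Matrix (Fin n) (Fin p) ℝ) (Y : Matrix (Fin n) (Fin q) ℝ)
    (Bhat : Matrix (Fin p) (Fin q) ℝ)
    (hmin : ∀ B : Matrix (Fin p) (Fin q) ℝ,
      smoothedFrob σ (c • (Y - X * Bhat)) + lam * norm21 Bhat ≤
        smoothedFrob σ (c • (Y - X * B)) + lam * norm21 B)
    (j : Fin p) :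
    c ^ 2 * rowNorm ((Xᵀ * (Y - X * Bhat)) j) ≤ lam * max (c * frob (Y - X * Bhat)) σ := by
  set E := Y - X * Bhat
  set u := (Xᵀ * E) j
  set Δ := updateRow (0 : Matrix (Fin p) (Fin q) ℝ) j u
  have hdir : ∀ t > 0, smoothedNorm σ (c • frobEquiv E) ≤
      smoothedNorm σ (c • frobEquiv E - t • c • frobEquiv (X * Δ)) + lam * rowNorm u * t := by
    intro t ht
    have hres : c • (Y - X * (Bhat + t • Δ)) = c • E - t • c • (X * Δ) := by
      rw [Matrix.mul_add, Matrix.mul_smul, smul_comm t c]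
      module
    have hpen : norm21 (Bhat + t • Δ) ≤ norm21 Bhat + t * rowNorm u := by
      have hΔ : norm21 Δ = rowNorm u := norm21_updateRow_zero j u
      simpa only [norm21_smul, hΔ, abs_of_pos ht] using norm21_add_le Bhat (t • Δ)
    have hopt := hmin (Bhat + t • Δ)
    rw [hres, smoothedFrob_eq_smoothedNorm, smoothedFrob_eq_smoothedNorm] at hopt
    simp only [map_sub, map_smul] at hopt
    linarith [mul_le_mul_of_nonneg_left hpen hlam]
  have hinner := inner_le_of_smoothedNorm_le_sub_smul hσ hdir
  rw [real_inner_smul_left, real_inner_smul_right, inner_frobEquiv_mul_updateRow_zero,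
    ← rowNorm_sq, norm_smul, Real.norm_of_nonneg hc.le, ← frob_eq_norm_frobEquiv] at hinner
  change c * (c * rowNorm u ^ 2) ≤ lam * rowNorm u * max (c * frob E) σ at hinner
  obtain hu | hu := (rowNorm_nonneg u).eq_or_lt
  · rw [← hu, mul_zero]
    positivity
  · refine le_of_mul_le_mul_right ?_ hu
    linarith

end Matrices

/-- First-order optimality bounds for the smoothed multitask square-root Lasso. -/
theorem smoothed_sqrt_lasso_optimality {n p q : ℕ} (hn : 0 < n) (hq : 0 < q)
    (σmin : ℝ) (hσ : 0 < σmin) (lam : ℝ) (hlam : 0 < lam)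
    (X : Matrix (Fin n) (Fin p) ℝ) (Y : Matrix (Fin n) (Fin q) ℝ)
    (Bhat : Matrix (Fin p) (Fin q) ℝ)
    (hmin : ∀ B : Matrix (Fin p) (Fin q) ℝ,
      smoothedFrob σmin ((1 / Real.sqrt ((n : ℝ) * q)) • (Y - X * Bhat)) +
          lam * norm21 Bhat ≤
        smoothedFrob σmin ((1 / Real.sqrt ((n : ℝ) * q)) • (Y - X * B)) +
          lam * norm21 B) :
    (frob (Y - X * Bhat) / Real.sqrt ((n : ℝ) * q) ≥ σmin →
      (1 / ((n : ℝ) * q)) * norm2inf (Xᵀ * (Y - X * Bhat)) ≤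
        lam * (frob (Y - X * Bhat) / Real.sqrt ((n : ℝ) * q))) ∧
    (frob (Y - X * Bhat) / Real.sqrt ((n : ℝ) * q) < σmin →
      (1 / ((n : ℝ) * q)) * norm2inf (Xᵀ * (Y - X * Bhat)) ≤ lam * σmin) ∧
    (1 / ((n : ℝ) * q)) * norm2inf (Xᵀ * (Y - X * Bhat)) ≤
      lam * max (frob (Y - X * Bhat) / Real.sqrt ((n : ℝ) * q)) σmin := by
  set r := frob (Y - X * Bhat) / Real.sqrt ((n : ℝ) * q)
  have hnq : (0 : ℝ) < n * q := by positivity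
  set c := 1 / Real.sqrt ((n : ℝ) * q)
  have hc : 0 < c := by positivity
  have hcr : c * frob (Y - X * Bhat) = r := one_div_mul_eq_div _ _
  have hc2 : c ^ 2 = 1 / ((n : ℝ) * q) := by rw [div_pow, one_pow, Real.sq_sqrt hnq.le]
  have hrows := sq_mul_rowNorm_transpose_mul_residual_le hσ hlam.le hc X Y Bhat hmin
  have hmain : 1 / ((n : ℝ) * q) * norm2inf (Xᵀ * (Y - X * Bhat)) ≤ lam * max r σmin := by
    rw [← hc2, norm2inf, Real.mul_iSup_of_nonneg (by positivity), ← hcr]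
    exact Real.iSup_le hrows (by positivity)
  refine ⟨fun h => ?_, fun h => ?_, hmain⟩
  · rwa [max_eq_left h] at hmain
  · rwa [max_eq_right h.le] at hmain
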